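/- Let H be a real Hilbert space, D ⊆ H a symmetric dictionary with sup_{g∈D} ‖g‖ < ∞, and u ∈ K₁(D). Let K ⊆ H be a closed subspace with orthogonal projection P_K, and set r = u − P_K u. Then ‖r‖² ≤ ‖u‖_{K₁(D)} · sup_{g∈D} ⟨g, r⟩. -/

import Mathlib

open RealInnerProductSpace Pointwise

/-- `BOne D` is the closure of the convex symmetric hull of the dictionary `D`:
the closure of the set of finite linear combinations `∑ aᵢ • gᵢ` with `gᵢ ∈ D`
and `∑ |aᵢ| ≤ 1`. -/
noncomputable def BOne {H : Type*} [NormedAddCommGroup H] [InnerProductSpace ℝ H]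
    (D : Set H) : Set H :=
  closure {v : H | ∃ (n : ℕ) (a : Fin n → ℝ) (g : Fin n → H),
    (∀ i, g i ∈ D) ∧ (∑ i, |a i|) ≤ 1 ∧ v = ∑ i, a i • g i}

/-- Membership in the variation space `K₁(D)`. -/
noncomputable def memK1 {H : Type*} [NormedAddCommGroup H] [InnerProductSpace ℝ H]
    (D : Set H) (v : H) : Prop :=
  ∃ c : ℝ, 0 < c ∧ v ∈ c • BOne D

/-- The variation norm `‖v‖_{K₁(D)} = inf {c > 0 : v ∈ c • B₁(D)}`. -/
noncomputable def varNorm {H : Type*} [NormedAddCommGroup H] [InnerProductSpace ℝ H]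
    (D : Set H) (v : H) : ℝ :=
  sInf {c : ℝ | 0 < c ∧ v ∈ c • BOne D}

/-!
Since `r = u - P_K u` is orthogonal to `K ∋ P_K u`, we have `‖r‖² = ⟪u, r⟫`. By symmetry of `D`,
`M = sup_{g ∈ D} ⟪g, r⟫` bounds `|⟪g, r⟫|` on `D`, hence bounds `⟪·, r⟫` on the absolutely convex
combinations of `D` and, by continuity, on their closure `B₁(D)`. Scaling gives `⟪u, r⟫ ≤ c M`
whenever `u ∈ c • B₁(D)`, and taking the infimum over `c` gives the claim.
-/

section

variable {H : Type*} [NormedAddCommGroup H] [InnerProductSpace ℝ H]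

theorem Submodule.norm_sub_starProjection_sq (K : Submodule ℝ H) [K.HasOrthogonalProjection]
    (u : H) : ‖u - K.starProjection u‖ ^ 2 = ⟪u, u - K.starProjection u⟫ := by
  rw [← real_inner_self_eq_norm_sq, inner_sub_left,
    Submodule.inner_right_of_mem_orthogonal (K.starProjection_apply_mem u)
      (K.sub_starProjection_mem_orthogonal u), sub_zero]

theorem bddAbove_inner_image_of_norm_le {D : Set H} {C : ℝ} (hC : ∀ g ∈ D, ‖g‖ ≤ C) (r : H) :
    BddAbove ((fun g => ⟪g, r⟫) '' D) := by
  refine ⟨C * ‖r‖, ?_⟩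
  rintro _ ⟨g, hg, rfl⟩
  exact (real_inner_le_norm g r).trans (mul_le_mul_of_nonneg_right (hC g hg) (norm_nonneg r))

theorem abs_inner_le_sSup_inner_image {D : Set H} (hsym : ∀ g ∈ D, -g ∈ D) {r : H}
    (hbdd : BddAbove ((fun g => ⟪g, r⟫) '' D)) {g : H} (hg : g ∈ D) :
    |⟪g, r⟫| ≤ sSup ((fun g => ⟪g, r⟫) '' D) := by
  have hneg : ⟪-g, r⟫ ≤ _ := le_csSup hbdd ⟨-g, hsym g hg, rfl⟩
  rw [inner_neg_left] at hneg
  exact abs_le.2 ⟨by linarith, le_csSup hbdd ⟨g, hg, rfl⟩⟩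

theorem sSup_inner_image_nonneg {D : Set H} (hsym : ∀ g ∈ D, -g ∈ D) {r : H}
    (hbdd : BddAbove ((fun g => ⟪g, r⟫) '' D)) : 0 ≤ sSup ((fun g => ⟪g, r⟫) '' D) := by
  rcases D.eq_empty_or_nonempty with rfl | ⟨g, hg⟩
  · simp
  · exact (abs_nonneg _).trans (abs_inner_le_sSup_inner_image hsym hbdd hg)

theorem inner_le_of_mem_BOne {D : Set H} {r : H} {M : ℝ} (hM0 : 0 ≤ M)
    (hM : ∀ g ∈ D, |⟪g, r⟫| ≤ M) {w : H} (hw : w ∈ BOne D) : ⟪w, r⟫ ≤ M := by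
  have hclosed : IsClosed {x : H | ⟪x, r⟫ ≤ M} :=
    isClosed_le (continuous_id.inner continuous_const) continuous_const
  refine closure_minimal ?_ hclosed hw
  rintro _ ⟨n, a, g, hg, ha, rfl⟩
  calc ⟪∑ i, a i • g i, r⟫ = ∑ i, a i * ⟪g i, r⟫ := by
        simp only [sum_inner, real_inner_smul_left]
    _ ≤ ∑ i, |a i| * M := Finset.sum_le_sum fun i _ =>
        (le_abs_self _).trans (by rw [abs_mul]; gcongr; exact hM _ (hg i))
    _ = (∑ i, |a i|) * M := (Finset.sum_mul ..).symm
    _ ≤ M := mul_le_of_le_one_left hM0 ha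

theorem inner_le_varNorm_mul {D : Set H} {u : H} (hu : memK1 D u) {r : H} {M : ℝ}
    (hM0 : 0 ≤ M) (hB : ∀ w ∈ BOne D, ⟪w, r⟫ ≤ M) : ⟪u, r⟫ ≤ varNorm D u * M := by
  obtain ⟨c, hc, hcu⟩ := hu
  rw [varNorm, mul_comm, ← smul_eq_mul, ← Real.sInf_smul_of_nonneg hM0]
  refine le_csInf ⟨M * c, c, ⟨hc, hcu⟩, rfl⟩ ?_
  rintro _ ⟨c', ⟨hc', w, hw, rfl⟩, rfl⟩
  show ⟪c' • w, r⟫ ≤ M * c'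
  rw [real_inner_smul_left, mul_comm M]
  exact mul_le_mul_of_nonneg_left (hB w hw) hc'.le

end

theorem stmt15_general {H : Type*} [NormedAddCommGroup H] [InnerProductSpace ℝ H]
    (D : Set H) (hsym : ∀ g ∈ D, -g ∈ D)
    (hbdd : ∃ C : ℝ, ∀ g ∈ D, ‖g‖ ≤ C)
    (u : H) (hu : memK1 D u)
    (K : Submodule ℝ H) [K.HasOrthogonalProjection]
    (r : H) (hr : r = u - (K.orthogonalProjectionOnto u : H)) :
    ‖r‖ ^ 2 ≤ varNorm D u * sSup ((fun g => ⟪g, r⟫) '' D) := by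
  obtain ⟨C, hC⟩ := hbdd
  have hbddM := bddAbove_inner_image_of_norm_le hC r
  have hM0 := sSup_inner_image_nonneg hsym hbddM
  have hbound := fun g (hg : g ∈ D) => abs_inner_le_sSup_inner_image hsym hbddM hg
  have hres : ‖r‖ ^ 2 = ⟪u, r⟫ := hr ▸ K.norm_sub_starProjection_sq u
  rw [hres]
  exact inner_le_varNorm_mul hu hM0 fun w hw => inner_le_of_mem_BOne hM0 hbound hw

/-- Duality bound for the residual of an orthogonal projection: for `u ∈ K₁(D)`
and `r = u - P_K u`, one has `‖r‖² ≤ ‖u‖_{K₁(D)} · sup_{g∈D} ⟨g, r⟩`. -/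
theorem stmt15 {H : Type*} [NormedAddCommGroup H] [InnerProductSpace ℝ H] [CompleteSpace H]
    (D : Set H) (hsym : ∀ g ∈ D, -g ∈ D)
    (hbdd : ∃ C : ℝ, ∀ g ∈ D, ‖g‖ ≤ C)
    (u : H) (hu : memK1 D u)
    (K : Submodule ℝ H) [K.HasOrthogonalProjection]
    (r : H) (hr : r = u - (K.orthogonalProjectionOnto u : H)) :
    ‖r‖ ^ 2 ≤ varNorm D u * sSup ((fun g => ⟪g, r⟫) '' D) :=
  stmt15_general D hsym hbdd u hu K r hr
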